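/- Let n ≥ 3 be an integer, r > 0, and let k be an integer with 1 ≤ k ≤ K where K = ⌊(n−2)/2⌋; set γ = kπ/n and γ' = (k+1)π/n. Let s be a real number with 2r·sin γ·sin γ' ≤ s, and define α_k(s) = arcsin((2r/s)·sin γ·sin γ') − γ and q_k(s,ψ) = r·cos(π/n)·sec γ·cos ψ − (s/2)·(tan γ·cos²ψ − cot γ·sin²ψ). Then r·cos(γ' − α_k(s)) = q_k(s, α_k(s)); equivalently, the vertex W = (r cos((2k+1)π/n), r sin((2k+1)π/n)) lies on the line {(x,y) ∈ ℝ² : x cos(γ + α_k(s)) + y sin(γ + α_k(s)) = q_k(s, α_k(s))}. -/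

import Mathlib

/-!
Write `ψ = α_k(s)`. The arcsin is chosen so that `s sin(γ + ψ) = 2r sin γ sin γ'`, and
`tan γ cos²ψ − cot γ sin²ψ = sin(γ + ψ) sin(γ − ψ) / (sin γ cos γ)`, so
`q_k(s, ψ) = r (cos(γ' − γ) cos ψ − sin γ' sin(γ − ψ)) / cos γ`, which is `r cos(γ' − ψ)` by the
addition formulas. The second form follows from `(2k+1)π/n − γ = γ'`.
-/

open Real

lemma sin_sq_mul_cos_sq_sub_cos_sq_mul_sin_sq (a b : ℝ) :
    sin a ^ 2 * cos b ^ 2 - cos a ^ 2 * sin b ^ 2 = sin (a + b) * sin (a - b) := by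
  rw [sin_add, sin_sub]; ring

lemma mul_sin_arcsin_div {x s : ℝ} (hx : 0 ≤ x) (hxs : x ≤ s) :
    s * sin (arcsin (x / s)) = x := by
  rcases (hx.trans hxs).eq_or_lt with rfl | hs0
  · simp [le_antisymm hxs hx]
  · rw [sin_arcsin (by linarith [div_nonneg hx hs0.le]) ((div_le_one hs0).2 hxs)]
    field_simp

lemma mul_cos_sub_eq_of_mul_sin_add_eq {r s γ γ' ψ : ℝ} (hc : cos γ ≠ 0) (hs : sin γ ≠ 0)
    (hψ : s * sin (γ + ψ) = 2 * r * sin γ * sin γ') :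
    r * cos (γ' - ψ) =
      r * cos (γ' - γ) * (cos γ)⁻¹ * cos ψ -
        s / 2 * (sin γ * (cos γ)⁻¹ * cos ψ ^ 2 - cos γ * (sin γ)⁻¹ * sin ψ ^ 2) := by
  have hq : s / 2 * (sin γ * (cos γ)⁻¹ * cos ψ ^ 2 - cos γ * (sin γ)⁻¹ * sin ψ ^ 2) =
      r * sin γ' * sin (γ - ψ) * (cos γ)⁻¹ := by
    calc _ = s * (sin γ ^ 2 * cos ψ ^ 2 - cos γ ^ 2 * sin ψ ^ 2) / (2 * sin γ * cos γ) := by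
          field_simp
      _ = s * sin (γ + ψ) * sin (γ - ψ) / (2 * sin γ * cos γ) := by
          rw [sin_sq_mul_cos_sq_sub_cos_sq_mul_sin_sq, ← mul_assoc]
      _ = _ := by rw [hψ]; field_simp
  rw [hq, cos_sub, cos_sub, sin_sub]
  field_simp
  ring

lemma polygon_angles_pos_le_pi_div_two {n k : ℕ} (hk : 1 ≤ k) (hkn : 2 * k + 2 ≤ n) :
    0 < k * π / n ∧ k * π / n < (k + 1) * π / n ∧ (k + 1) * π / n ≤ π / 2 := by
  have hk' : (1 : ℝ) ≤ k := by exact_mod_cast hk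
  have hkn' : 2 * (k : ℝ) + 2 ≤ n := by exact_mod_cast hkn
  have hn : (0 : ℝ) < n := by linarith
  refine ⟨by positivity, by gcongr; linarith, ?_⟩
  rw [div_le_div_iff₀ hn two_pos]
  nlinarith [pi_pos]

theorem vertex_on_chord_line_general (n : ℕ) (r : ℝ) (hr : 0 < r)
    (k : ℕ) (hk₁ : 1 ≤ k) (hk₂ : k ≤ (n - 2) / 2) (s : ℝ)
    (hs : 2 * r * Real.sin (k * π / n) * Real.sin ((k + 1) * π / n) ≤ s) :
    r * Real.cos ((k + 1) * π / n -
        (Real.arcsin (2 * r / s * Real.sin (k * π / n) * Real.sin ((k + 1) * π / n)) -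
          k * π / n)) =
      r * Real.cos (π / n) * (Real.cos (k * π / n))⁻¹ *
          Real.cos (Real.arcsin (2 * r / s * Real.sin (k * π / n) *
            Real.sin ((k + 1) * π / n)) - k * π / n) -
        s / 2 * (Real.sin (k * π / n) * (Real.cos (k * π / n))⁻¹ *
            Real.cos (Real.arcsin (2 * r / s * Real.sin (k * π / n) *
              Real.sin ((k + 1) * π / n)) - k * π / n) ^ 2 -
          Real.cos (k * π / n) * (Real.sin (k * π / n))⁻¹ *
            Real.sin (Real.arcsin (2 * r / s * Real.sin (k * π / n) *
              Real.sin ((k + 1) * π / n)) - k * π / n) ^ 2) ∧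
    r * Real.cos ((2 * k + 1) * π / n) *
          Real.cos (k * π / n +
            (Real.arcsin (2 * r / s * Real.sin (k * π / n) *
              Real.sin ((k + 1) * π / n)) - k * π / n)) +
        r * Real.sin ((2 * k + 1) * π / n) *
          Real.sin (k * π / n +
            (Real.arcsin (2 * r / s * Real.sin (k * π / n) *
              Real.sin ((k + 1) * π / n)) - k * π / n)) =
      r * Real.cos (π / n) * (Real.cos (k * π / n))⁻¹ *
          Real.cos (Real.arcsin (2 * r / s * Real.sin (k * π / n) *
            Real.sin ((k + 1) * π / n)) - k * π / n) -
        s / 2 * (Real.sin (k * π / n) * (Real.cos (k * π / n))⁻¹ *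
            Real.cos (Real.arcsin (2 * r / s * Real.sin (k * π / n) *
              Real.sin ((k + 1) * π / n)) - k * π / n) ^ 2 -
          Real.cos (k * π / n) * (Real.sin (k * π / n))⁻¹ *
            Real.sin (Real.arcsin (2 * r / s * Real.sin (k * π / n) *
              Real.sin ((k + 1) * π / n)) - k * π / n) ^ 2) := by
  obtain ⟨hγ, hγγ', hγ'⟩ := polygon_angles_pos_le_pi_div_two hk₁ (by omega : 2 * k + 2 ≤ n)
  set γ : ℝ := k * π / n
  set γ' : ℝ := (k + 1) * π / n
  have hcos : 0 < cos γ := cos_pos_of_mem_Ioo ⟨by linarith [pi_pos], by linarith⟩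
  have hsin : 0 < sin γ := sin_pos_of_pos_of_lt_pi hγ (by linarith [pi_pos])
  have hsin' : 0 < sin γ' := sin_pos_of_pos_of_lt_pi (by linarith) (by linarith [pi_pos])
  have hA : s * sin (γ + (arcsin (2 * r / s * sin γ * sin γ') - γ)) = 2 * r * sin γ * sin γ' := by
    rw [add_sub_cancel, show 2 * r / s * sin γ * sin γ' = 2 * r * sin γ * sin γ' / s by ring]
    exact mul_sin_arcsin_div (by positivity) hs
  have hq := mul_cos_sub_eq_of_mul_sin_add_eq hcos.ne' hsin.ne' hA
  rw [show γ' - γ = π / n by ring] at hq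
  refine ⟨hq, ?_⟩
  rw [← hq, mul_assoc, mul_assoc r (sin _), ← mul_add, ← cos_sub]
  congr 2
  ring

/-- At the angle `α_k(s) = arcsin((2r/s) sin γ sin γ') − γ` (with `γ = kπ/n`,
`γ' = (k+1)π/n`), the chord of length `s` between the two side lines has an endpoint
at the vertex `W = (r cos((2k+1)π/n), r sin((2k+1)π/n))`:
`r cos(γ' − α_k(s)) = q_k(s, α_k(s))`, equivalently `W` lies on the line with normal
angle `γ + α_k(s)` at distance `q_k(s, α_k(s))` from the origin. -/
theorem vertex_on_chord_line (n : ℕ) (hn : 3 ≤ n) (r : ℝ) (hr : 0 < r)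
    (k : ℕ) (hk₁ : 1 ≤ k) (hk₂ : k ≤ (n - 2) / 2) (s : ℝ)
    (hs : 2 * r * Real.sin (k * π / n) * Real.sin ((k + 1) * π / n) ≤ s) :
    r * Real.cos ((k + 1) * π / n -
        (Real.arcsin (2 * r / s * Real.sin (k * π / n) * Real.sin ((k + 1) * π / n)) -
          k * π / n)) =
      r * Real.cos (π / n) * (Real.cos (k * π / n))⁻¹ *
          Real.cos (Real.arcsin (2 * r / s * Real.sin (k * π / n) *
            Real.sin ((k + 1) * π / n)) - k * π / n) -
        s / 2 * (Real.sin (k * π / n) * (Real.cos (k * π / n))⁻¹ *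
            Real.cos (Real.arcsin (2 * r / s * Real.sin (k * π / n) *
              Real.sin ((k + 1) * π / n)) - k * π / n) ^ 2 -
          Real.cos (k * π / n) * (Real.sin (k * π / n))⁻¹ *
            Real.sin (Real.arcsin (2 * r / s * Real.sin (k * π / n) *
              Real.sin ((k + 1) * π / n)) - k * π / n) ^ 2) ∧
    r * Real.cos ((2 * k + 1) * π / n) *
          Real.cos (k * π / n +
            (Real.arcsin (2 * r / s * Real.sin (k * π / n) *
              Real.sin ((k + 1) * π / n)) - k * π / n)) +
        r * Real.sin ((2 * k + 1) * π / n) *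
          Real.sin (k * π / n +
            (Real.arcsin (2 * r / s * Real.sin (k * π / n) *
              Real.sin ((k + 1) * π / n)) - k * π / n)) =
      r * Real.cos (π / n) * (Real.cos (k * π / n))⁻¹ *
          Real.cos (Real.arcsin (2 * r / s * Real.sin (k * π / n) *
            Real.sin ((k + 1) * π / n)) - k * π / n) -
        s / 2 * (Real.sin (k * π / n) * (Real.cos (k * π / n))⁻¹ *
            Real.cos (Real.arcsin (2 * r / s * Real.sin (k * π / n) *
              Real.sin ((k + 1) * π / n)) - k * π / n) ^ 2 -
          Real.cos (k * π / n) * (Real.sin (k * π / n))⁻¹ *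
            Real.sin (Real.arcsin (2 * r / s * Real.sin (k * π / n) *
              Real.sin ((k + 1) * π / n)) - k * π / n) ^ 2) :=
  vertex_on_chord_line_general n r hr k hk₁ hk₂ s hs
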